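/- Let M > 0, h ≥ 1, R > 1, and let ω ∈ C^∞(ℝ) satisfy |ω(ξ)| ≤ 1 for all ξ, ω(ξ) = 0 for |ξ| ≤ 1, and ω constant on each of the sets {ξ ≥ R} and {ξ ≤ −R}. Define λ(x,ξ) := M·ω(ξ/h)·∫₀ˣ ⟨y⟩^{-1} dy. Then for every α ∈ ℕ and every integer β ≥ 1 there exists a constant C_{α,β} > 0, depending on α, β, R and ω but not on h, M, x, ξ, such that |∂_ξ^α ∂_x^β λ(x,ξ)| ≤ M·C_{α,β}·⟨x⟩^{-β}·⟨ξ⟩_h^{-α} for all x, ξ ∈ ℝ. -/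

import Mathlib

/-!
The symbol factorises as `M · ω(ξ/h) · F(x)` with `F(x) = ∫₀ˣ ⟨y⟩⁻¹ dy`, so the mixed derivative
is `M · h^{-α} ω^{(α)}(ξ/h) · F^{(β)}(x)`. Since `F^{(β)} = ∂^{β-1} (1 + x²)^{-1/2}` is a polynomial
of degree `≤ β - 1` times `(1 + x²)^{-β+1/2}`, it is `O(⟨x⟩^{-β})`. On the `ξ` side,
`⟨ξ⟩_h = h ⟨ξ/h⟩` turns `h^{-α}` into `⟨ξ/h⟩^α ⟨ξ⟩_h^{-α}`, and `⟨u⟩^α ω^{(α)}(u)` is bounded: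
by `|ω| ≤ 1` when `α = 0`, and because `ω^{(α)}` is continuous and supported in `[-R, R]` when
`α ≥ 1`.
-/

open MeasureTheory Real

noncomputable section

/-- The Japanese bracket `⟨x⟩ = (1 + x²)^(1/2)`. -/
def jb (x : ℝ) : ℝ := Real.sqrt (1 + x ^ 2)

/-- `⟨ξ⟩ₕ = (h² + ξ²)^(1/2)`. -/
def jbh (h ξ : ℝ) : ℝ := Real.sqrt (h ^ 2 + ξ ^ 2)

open Polynomial

lemma jb_pos (x : ℝ) : 0 < jb x := Real.sqrt_pos.2 (by positivity)

lemma one_le_jb (x : ℝ) : 1 ≤ jb x :=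
  Real.one_le_sqrt.2 (le_add_of_nonneg_right (sq_nonneg x))

lemma abs_le_jb (x : ℝ) : |x| ≤ jb x := by
  rw [← Real.sqrt_sq_eq_abs]
  exact Real.sqrt_le_sqrt (le_add_of_nonneg_left zero_le_one)

lemma continuous_jb : Continuous jb := by
  unfold jb; fun_prop

lemma jb_rpow_two_mul (x t : ℝ) : jb x ^ (2 * t) = (1 + x ^ 2) ^ t := by
  rw [Real.rpow_mul (jb_pos x).le, Real.rpow_two, jb, Real.sq_sqrt (by positivity)]

lemma jbh_eq_mul_jb {h : ℝ} (hh : 0 < h) (ξ : ℝ) : jbh h ξ = h * jb (ξ / h) := by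
  rw [jbh, jb, ← Real.sqrt_sq hh.le, ← Real.sqrt_mul (sq_nonneg h), Real.sqrt_sq hh.le]
  congr 1
  field_simp

lemma abs_eval_le_of_natDegree_le (p : ℝ[X]) {k : ℕ} (hk : p.natDegree ≤ k) :
    ∃ C > 0, ∀ x, |p.eval x| ≤ C * jb x ^ k := by
  refine ⟨∑ i ∈ Finset.range (k + 1), |p.coeff i| + 1, by positivity, fun x => ?_⟩
  have hterm (i : ℕ) (hi : i ∈ Finset.range (k + 1)) :
      |p.coeff i * x ^ i| ≤ |p.coeff i| * jb x ^ k := by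
    rw [abs_mul, abs_pow]
    gcongr
    calc |x| ^ i ≤ jb x ^ i := by gcongr; exact abs_le_jb x
      _ ≤ jb x ^ k := pow_le_pow_right₀ (one_le_jb x) (Finset.mem_range_succ_iff.1 hi)
  calc |p.eval x| = |∑ i ∈ Finset.range (k + 1), p.coeff i * x ^ i| := by
        rw [eval_eq_sum_range' (Nat.lt_succ_of_le hk)]
    _ ≤ ∑ i ∈ Finset.range (k + 1), |p.coeff i| * jb x ^ k :=
        (Finset.abs_sum_le_sum_abs _ _).trans (Finset.sum_le_sum hterm)
    _ ≤ (∑ i ∈ Finset.range (k + 1), |p.coeff i| + 1) * jb x ^ k := by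
        rw [← Finset.sum_mul]
        exact mul_le_mul_of_nonneg_right (by linarith) (pow_nonneg (jb_pos x).le k)

lemma hasDerivAt_one_add_sq_rpow (s x : ℝ) :
    HasDerivAt (fun x => (1 + x ^ 2) ^ s) (2 * x * s * (1 + x ^ 2) ^ (s - 1)) x := by
  have hbase : HasDerivAt (fun x : ℝ => 1 + x ^ 2) (2 * x) x := by
    simpa using (hasDerivAt_pow 2 x).const_add 1
  exact hbase.rpow_const (Or.inl (by positivity))

lemma iteratedDeriv_one_add_sq_rpow (s : ℝ) (k : ℕ) : ∃ p : ℝ[X], p.natDegree ≤ k ∧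
    iteratedDeriv k (fun x => (1 + x ^ 2) ^ s) = fun x => p.eval x * (1 + x ^ 2) ^ (s - k) := by
  induction k with
  | zero => exact ⟨1, by simp, by simp⟩
  | succ k ih =>
    obtain ⟨p, hdeg, hp⟩ := ih
    -- `(X² + 1) p' + 2(s - k) X p`, written so that its degree bound needs no case split on `p`
    refine ⟨derivative (p * (X ^ 2 + 1)) + C (2 * (s - k - 1)) * (X * p), ?_, ?_⟩
    · have h₁ : (p * (X ^ 2 + 1)).natDegree ≤ k + 2 :=
        natDegree_mul_le_of_le hdeg (by compute_degree!)
      refine natDegree_add_le_of_degree_le ((natDegree_derivative_le _).trans (by omega)) ?_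
      exact (natDegree_C_mul_le _ _).trans
        ((natDegree_mul_le_of_le natDegree_X_le hdeg).trans (by omega))
    · funext x
      have hsplit : (1 + x ^ 2 : ℝ) ^ (s - k) = (1 + x ^ 2) * (1 + x ^ 2) ^ (s - k - 1) := by
        rw [Real.rpow_sub_one (by positivity)]
        field_simp
      rw [iteratedDeriv_succ, hp,
        ((p.hasDerivAt x).fun_mul (hasDerivAt_one_add_sq_rpow _ x)).deriv]
      push_cast
      rw [show s - (k + 1) = s - k - 1 by ring, hsplit]
      simp only [eval_add, eval_mul, eval_C, eval_pow, eval_X, eval_one, eval_zero, derivative_mul,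
        derivative_add, derivative_X_pow, derivative_one]
      ring

lemma abs_iteratedDeriv_one_add_sq_rpow_le (s : ℝ) (k : ℕ) :
    ∃ C > 0, ∀ x, |iteratedDeriv k (fun x => (1 + x ^ 2) ^ s) x| ≤ C * jb x ^ (2 * s - k) := by
  obtain ⟨p, hdeg, hp⟩ := iteratedDeriv_one_add_sq_rpow s k
  obtain ⟨C, hC, hCp⟩ := abs_eval_le_of_natDegree_le p hdeg
  refine ⟨C, hC, fun x => ?_⟩
  have hjb := jb_pos x
  calc |iteratedDeriv k (fun x => (1 + x ^ 2) ^ s) x|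
      = |p.eval x| * jb x ^ (2 * (s - k)) := by
        rw [hp, abs_mul, jb_rpow_two_mul, abs_of_nonneg (Real.rpow_nonneg (by positivity) _)]
    _ ≤ C * jb x ^ k * jb x ^ (2 * (s - k)) := by gcongr; exact hCp x
    _ = C * jb x ^ (2 * s - k) := by
        rw [mul_assoc, ← Real.rpow_natCast, ← Real.rpow_add hjb]
        ring_nf

lemma inv_jb_eq_rpow (x : ℝ) : (jb x)⁻¹ = (1 + x ^ 2) ^ (-1 / 2 : ℝ) := by
  rw [← jb_rpow_two_mul]
  norm_num [Real.rpow_neg_one]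

lemma abs_iteratedDeriv_inv_jb_le (k : ℕ) :
    ∃ C > 0, ∀ x, |iteratedDeriv k (fun x => (jb x)⁻¹) x| ≤ C * jb x ^ (-(k + 1 : ℝ)) := by
  obtain ⟨C, hC, hCx⟩ := abs_iteratedDeriv_one_add_sq_rpow_le (-1 / 2) k
  refine ⟨C, hC, fun x => ?_⟩
  simp only [inv_jb_eq_rpow]
  convert hCx x using 3
  ring

lemma deriv_integral_inv_jb :
    deriv (fun x => ∫ y in (0 : ℝ)..x, (jb y)⁻¹) = fun x => (jb x)⁻¹ :=
  funext <| (continuous_jb.inv₀ fun y => (jb_pos y).ne').deriv_integral _ 0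

lemma hasCompactSupport_iteratedDeriv_of_const_outside {R : ℝ} {ω : ℝ → ℝ}
    (hωcp : ∀ ξ₁ ξ₂ : ℝ, R ≤ ξ₁ → R ≤ ξ₂ → ω ξ₁ = ω ξ₂)
    (hωcm : ∀ ξ₁ ξ₂ : ℝ, ξ₁ ≤ -R → ξ₂ ≤ -R → ω ξ₁ = ω ξ₂) {α : ℕ} (hα : α ≠ 0) :
    HasCompactSupport (iteratedDeriv α ω) := by
  refine HasCompactSupport.intro (isCompact_Icc (a := -R) (b := R)) fun u hu => ?_
  have hconst {s : Set ℝ} (hs : IsOpen s) (hu : u ∈ s) (hω : Set.EqOn ω (fun _ => ω u) s) :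
      iteratedDeriv α ω u = 0 := by
    rw [hω.iteratedDeriv_of_isOpen hs α hu, iteratedDeriv_const, if_neg hα]
  rcases not_and_or.1 hu with hu | hu
  · exact hconst isOpen_Iio (not_le.1 hu) fun v hv => hωcm v u hv.out.le (not_le.1 hu).le
  · exact hconst isOpen_Ioi (not_le.1 hu) fun v hv => hωcp v u hv.out.le (not_le.1 hu).le

lemma exists_abs_jb_pow_mul_iteratedDeriv_le {R : ℝ} {ω : ℝ → ℝ} {α : ℕ}
    (hω : ContDiff ℝ α ω) (hωb : ∀ ξ : ℝ, |ω ξ| ≤ 1)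
    (hωcp : ∀ ξ₁ ξ₂ : ℝ, R ≤ ξ₁ → R ≤ ξ₂ → ω ξ₁ = ω ξ₂)
    (hωcm : ∀ ξ₁ ξ₂ : ℝ, ξ₁ ≤ -R → ξ₂ ≤ -R → ω ξ₁ = ω ξ₂) :
    ∃ C > 0, ∀ u, |jb u ^ α * iteratedDeriv α ω u| ≤ C := by
  rcases eq_or_ne α 0 with rfl | hα
  · exact ⟨1, one_pos, fun u => by simpa using hωb u⟩
  obtain ⟨C, hC⟩ := ((continuous_jb.pow α).mul
      (hω.continuous_iteratedDeriv α le_rfl)).bounded_above_of_compact_support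
    (hasCompactSupport_iteratedDeriv_of_const_outside hωcp hωcm hα).mul_left
  exact ⟨max C 1, by positivity, fun u => (hC u).trans (le_max_left _ _)⟩

lemma abs_inv_pow_mul_comp_div_le {φ : ℝ → ℝ} {C : ℝ} {α : ℕ}
    (hφ : ∀ u, |jb u ^ α * φ u| ≤ C) {h : ℝ} (hh : 0 < h) (ξ : ℝ) :
    |h⁻¹ ^ α * φ (ξ / h)| ≤ C * jbh h ξ ^ (-(α : ℝ)) := by
  have hj : 0 < jbh h ξ := by rw [jbh_eq_mul_jb hh]; exact mul_pos hh (jb_pos _)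
  have hscale : h⁻¹ ^ α * φ (ξ / h) = jb (ξ / h) ^ α * φ (ξ / h) * (jbh h ξ ^ α)⁻¹ := by
    rw [jbh_eq_mul_jb hh, mul_pow, mul_inv, inv_pow]
    field_simp [(jb_pos (ξ / h)).ne']
  have hinv : 0 < (jbh h ξ ^ α)⁻¹ := inv_pos.2 (pow_pos hj α)
  rw [hscale, abs_mul, abs_of_pos hinv, Real.rpow_neg hj.le, Real.rpow_natCast]
  exact mul_le_mul_of_nonneg_right (hφ _) hinv.le

lemma iteratedDeriv_iteratedDeriv_mul_comp_div {ω : ℝ → ℝ} {α : ℕ} (hω : ContDiff ℝ α ω)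
    (F : ℝ → ℝ) (β : ℕ) (M h x ξ : ℝ) :
    iteratedDeriv α (fun ξ' => iteratedDeriv β (fun x' => M * ω (ξ' / h) * F x') x) ξ =
      M * iteratedDeriv β F x * (h⁻¹ ^ α * iteratedDeriv α ω (ξ / h)) := by
  simp only [iteratedDeriv_const_mul_field, iteratedDeriv_mul_const_field, div_eq_inv_mul,
    iteratedDeriv_comp_const_mul hω]
  ring

theorem stmt1_general (R : ℝ)
    (ω : ℝ → ℝ) (hω : ContDiff ℝ (⊤ : ℕ∞) ω) (hωb : ∀ ξ : ℝ, |ω ξ| ≤ 1)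
    (hωcp : ∀ ξ₁ ξ₂ : ℝ, R ≤ ξ₁ → R ≤ ξ₂ → ω ξ₁ = ω ξ₂)
    (hωcm : ∀ ξ₁ ξ₂ : ℝ, ξ₁ ≤ -R → ξ₂ ≤ -R → ω ξ₁ = ω ξ₂) :
    ∀ α β : ℕ, 1 ≤ β → ∃ C > 0, ∀ M h : ℝ, 0 < M → 1 ≤ h → ∀ x ξ : ℝ,
      |iteratedDeriv α
          (fun ξ' => iteratedDeriv β
            (fun x' => M * ω (ξ' / h) * ∫ y in (0:ℝ)..x', (jb y)⁻¹) x) ξ| ≤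
        M * C * jb x ^ (-(β : ℝ)) * jbh h ξ ^ (-(α : ℝ)) := by
  intro α β hβ
  obtain ⟨k, rfl⟩ : ∃ k, β = k + 1 := ⟨β - 1, by omega⟩
  have hωα : ContDiff ℝ α ω := hω.of_le (by exact_mod_cast le_top)
  obtain ⟨C₁, hC₁, hx⟩ := abs_iteratedDeriv_inv_jb_le k
  obtain ⟨C₂, hC₂, hξ⟩ := exists_abs_jb_pow_mul_iteratedDeriv_le hωα hωb hωcp hωcm
  refine ⟨C₁ * C₂, by positivity, fun M h hM hh x ξ => ?_⟩
  rw [iteratedDeriv_iteratedDeriv_mul_comp_div hωα,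
    iteratedDeriv_succ', deriv_integral_inv_jb, abs_mul, abs_mul, abs_of_pos hM]
  push_cast
  calc M * |iteratedDeriv k (fun x => (jb x)⁻¹) x| * |h⁻¹ ^ α * iteratedDeriv α ω (ξ / h)|
      ≤ M * (C₁ * jb x ^ (-(k + 1 : ℝ))) * (C₂ * jbh h ξ ^ (-(α : ℝ))) := by
        refine mul_le_mul (mul_le_mul_of_nonneg_left (hx x) hM.le)
          (abs_inv_pow_mul_comp_div_le hξ (by linarith) ξ) (abs_nonneg _) ?_
        exact mul_nonneg hM.le (mul_nonneg hC₁.le (Real.rpow_nonneg (jb_pos x).le _))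
    _ = M * (C₁ * C₂) * jb x ^ (-(k + 1 : ℝ)) * jbh h ξ ^ (-(α : ℝ)) := by ring

/-- estimates for `∂_ξ^α ∂_x^β λ(x,ξ)`, `β ≥ 1`, where
`λ(x,ξ) = M·ω(ξ/h)·∫₀ˣ ⟨y⟩⁻¹ dy`, with a constant independent of `h`, `M`, `x`, `ξ`. -/
theorem stmt1 (R : ℝ) (hR : 1 < R)
    (ω : ℝ → ℝ) (hω : ContDiff ℝ (⊤ : ℕ∞) ω) (hωb : ∀ ξ : ℝ, |ω ξ| ≤ 1)
    (hω0 : ∀ ξ : ℝ, |ξ| ≤ 1 → ω ξ = 0)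
    (hωcp : ∀ ξ₁ ξ₂ : ℝ, R ≤ ξ₁ → R ≤ ξ₂ → ω ξ₁ = ω ξ₂)
    (hωcm : ∀ ξ₁ ξ₂ : ℝ, ξ₁ ≤ -R → ξ₂ ≤ -R → ω ξ₁ = ω ξ₂) :
    ∀ α β : ℕ, 1 ≤ β → ∃ C > 0, ∀ M h : ℝ, 0 < M → 1 ≤ h → ∀ x ξ : ℝ,
      |iteratedDeriv α
          (fun ξ' => iteratedDeriv β
            (fun x' => M * ω (ξ' / h) * ∫ y in (0:ℝ)..x', (jb y)⁻¹) x) ξ| ≤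
        M * C * jb x ^ (-(β : ℝ)) * jbh h ξ ^ (-(α : ℝ)) :=
  stmt1_general R ω hω hωb hωcp hωcm
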